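/- arXiv:1306.5358 — 4 statements merged into one kernel-verified Lean document; each statement's English description precedes it below -/
import Mathlib

section
/- For positive semidefinite matrices X and Y over ℂ of the same size, and real numbers p, q > 1 with 1/p + 1/q = 1, one has tr(XY) ≤ (1/p) tr(X^p) + (1/q) tr(Y^q). -/
open Matrix ComplexOrder

/-- Functional calculus for Hermitian matrices: apply `f` to the eigenvalues. -/
noncomputable def mfun {m : Type*} [Fintype m] [DecidableEq m] (f : ℝ → ℝ)
    (A : Matrix m m ℂ) : Matrix m m ℂ :=
  if hA : A.IsHermitian then
    (hA.eigenvectorUnitary : Matrix m m ℂ) *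
      Matrix.diagonal (fun i => (f (hA.eigenvalues i) : ℂ)) *
      (star (hA.eigenvectorUnitary : Matrix m m ℂ))
  else 0

/-- Real matrix power via the functional calculus. -/
noncomputable def mpow {m : Type*} [Fintype m] [DecidableEq m]
    (A : Matrix m m ℂ) (p : ℝ) : Matrix m m ℂ :=
  mfun (fun x => x ^ p) A

/-!
Diagonalize `X = U diag(λ) U*` and `Y = V diag(μ) V*`. With the unitary `W = U* V`,
`tr (X Y) = ∑ᵢⱼ λᵢ μⱼ |Wᵢⱼ|²`, and `(|Wᵢⱼ|²)` is doubly stochastic. Bounding each `λᵢ μⱼ` by the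
scalar Young inequality `λᵢ^p / p + μⱼ^q / q` and summing against unit row and column sums gives
`∑ᵢ λᵢ^p / p + ∑ⱼ μⱼ^q / q = tr (X^p) / p + tr (Y^q) / q`.
-/

open Finset

namespace Matrix

variable {n : Type*} [Fintype n] [DecidableEq n]

theorem sum_sum_mul_le_of_mem_doublyStochastic {R : Type*} [Semiring R] [PartialOrder R]
    [IsOrderedRing R] {w : Matrix n n R} (hw : w ∈ doublyStochastic R n) {g : n → n → R}
    {f h : n → R} (hg : ∀ i j, g i j ≤ f i + h j) :
    ∑ i, ∑ j, g i j * w i j ≤ ∑ i, f i + ∑ j, h j :=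
  calc ∑ i, ∑ j, g i j * w i j ≤ ∑ i, ∑ j, (f i + h j) * w i j :=
        sum_le_sum fun i _ => sum_le_sum fun j _ =>
          mul_le_mul_of_nonneg_right (hg i j) (nonneg_of_mem_doublyStochastic hw)
    _ = ∑ i, f i * ∑ j, w i j + ∑ j, h j * ∑ i, w i j := by
        simp only [add_mul, sum_add_distrib, mul_sum]
        rw [sum_comm (f := fun i j => h j * w i j)]
    _ = ∑ i, f i + ∑ j, h j := by
        simp [sum_row_of_mem_doublyStochastic hw, sum_col_of_mem_doublyStochastic hw]

theorem sum_sum_mul_mul_le_of_mem_doublyStochastic {w : Matrix n n ℝ}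
    (hw : w ∈ doublyStochastic ℝ n) {a b : n → ℝ} (ha : ∀ i, 0 ≤ a i) (hb : ∀ j, 0 ≤ b j)
    {p q : ℝ} (hpq : p.HolderConjugate q) :
    ∑ i, ∑ j, a i * b j * w i j ≤ 1 / p * ∑ i, a i ^ p + 1 / q * ∑ j, b j ^ q := by
  simp only [mul_sum, one_div_mul_eq_div]
  exact sum_sum_mul_le_of_mem_doublyStochastic hw fun i j =>
    Real.young_inequality_of_nonneg (ha i) (hb j) hpq

variable {𝕜 : Type*} [RCLike 𝕜]

theorem of_norm_sq_mem_doublyStochastic_of_mem_unitaryGroup {U : Matrix n n 𝕜}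
    (hU : U ∈ unitaryGroup n 𝕜) :
    of (fun i j => ‖U i j‖ ^ 2) ∈ doublyStochastic ℝ n := by
  refine mem_doublyStochastic_iff_sum.2 ⟨fun i j => by simp, fun i => ?_, fun j => ?_⟩
  · have h : (U * star U) i i = 1 := by rw [Unitary.mul_star_self_of_mem hU, one_apply_eq]
    simp only [mul_apply, star_apply, ← starRingEnd_apply, RCLike.mul_conj] at h
    exact_mod_cast h
  · have h : (star U * U) j j = 1 := by rw [Unitary.star_mul_self_of_mem hU, one_apply_eq]
    simp only [mul_apply, star_apply, ← starRingEnd_apply, RCLike.conj_mul] at h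
    exact_mod_cast h

theorem trace_diagonal_mul_mul_diagonal_mul_star (d e : n → ℝ) (W : Matrix n n 𝕜) :
    (diagonal (fun i => (d i : 𝕜)) * W * diagonal (fun j => (e j : 𝕜)) * star W).trace =
      ((∑ i, ∑ j, d i * e j * ‖W i j‖ ^ 2 : ℝ) : 𝕜) := by
  push_cast
  refine sum_congr rfl fun i _ => ?_
  rw [diag_apply, mul_apply]
  refine sum_congr rfl fun j _ => ?_
  rw [mul_diagonal, diagonal_mul, star_apply, ← starRingEnd_apply, ← RCLike.mul_conj]
  ring

theorem IsHermitian.trace_mul_eq_sum {A B : Matrix n n 𝕜} (hA : A.IsHermitian)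
    (hB : B.IsHermitian) :
    (A * B).trace = ((∑ i, ∑ j, hA.eigenvalues i * hB.eigenvalues j *
      ‖(star (hA.eigenvectorUnitary : Matrix n n 𝕜) * hB.eigenvectorUnitary) i j‖ ^ 2 : ℝ) : 𝕜) := by
  rw [← trace_diagonal_mul_mul_diagonal_mul_star]
  conv_lhs => rw [hA.spectral_theorem, hB.spectral_theorem]
  simp only [Unitary.conjStarAlgAut_apply, Function.comp_def, star_mul, star_star, mul_assoc]
  rw [trace_mul_comm]
  simp only [mul_assoc]

end Matrix

theorem trace_mfun {m : Type*} [Fintype m] [DecidableEq m] (f : ℝ → ℝ) {A : Matrix m m ℂ}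
    (hA : A.IsHermitian) : (mfun f A).trace = ((∑ i, f (hA.eigenvalues i) : ℝ) : ℂ) := by
  rw [mfun, dif_pos hA, trace_mul_cycle, Unitary.coe_star_mul_self, one_mul, trace_diagonal]
  push_cast
  rfl

theorem young_trace_inequality_general {n : ℕ} (X Y : Matrix (Fin n) (Fin n) ℂ)
    (hX : X.PosSemidef) (hY : Y.PosSemidef) (p q : ℝ) (hp : 1 < p)
    (hpq : 1 / p + 1 / q = 1) :
    (X * Y).trace ≤ (1 / p : ℂ) * (mpow X p).trace + (1 / q : ℂ) * (mpow Y q).trace := by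
  have hconj : p.HolderConjugate q :=
    Real.holderConjugate_iff.mpr ⟨hp, by simpa only [one_div] using hpq⟩
  have hW := of_norm_sq_mem_doublyStochastic_of_mem_unitaryGroup
    (star hX.isHermitian.eigenvectorUnitary * hY.isHermitian.eigenvectorUnitary).2
  have key := sum_sum_mul_mul_le_of_mem_doublyStochastic hW
    hX.eigenvalues_nonneg hY.eigenvalues_nonneg hconj
  -- `norm_cast` does not identify the `RCLike.ofReal` cast of `trace_mul_eq_sum` with `Complex.ofReal`.
  rw [hX.isHermitian.trace_mul_eq_sum hY.isHermitian, mpow, mpow,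
    trace_mfun _ hX.isHermitian, trace_mfun _ hY.isHermitian, RCLike.ofReal_eq_complex_ofReal]
  exact_mod_cast key

theorem young_trace_inequality {n : ℕ} (X Y : Matrix (Fin n) (Fin n) ℂ)
    (hX : X.PosSemidef) (hY : Y.PosSemidef) (p q : ℝ) (hp : 1 < p) (hq : 1 < q)
    (hpq : 1 / p + 1 / q = 1) :
    (X * Y).trace ≤ (1 / p : ℂ) * (mpow X p).trace + (1 / q : ℂ) * (mpow Y q).trace :=
  young_trace_inequality_general X Y hX hY p q hp hpq
end

section
/- For positive semidefinite matrices X and Y with p, q > 1, 1/p + 1/q = 1, if X^p = Y^q then tr(XY) = (1/p) tr(X^p) + (1/q) tr(Y^q). -/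
open Matrix ComplexOrder

/-! Since `Y ^ q` determines `Y`, the hypothesis gives `Y = (X ^ p) ^ (1 / q) = X ^ (p - 1)`, so
`X * Y = X ^ p` and `tr (X * Y) = (1 / p + 1 / q) * tr (X ^ p)`. Only the continuous functional
calculus is involved, so `mpow` is replaced by `CFC.rpow`, which it agrees with on positive
semidefinite matrices. -/

open scoped MatrixOrder NNReal

namespace CFC

variable {A : Type*} [PartialOrder A] [Ring A] [StarRing A] [TopologicalSpace A]
  [StarOrderedRing A] [Algebra ℝ A] [ContinuousFunctionalCalculus ℝ A IsSelfAdjoint]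
  [NonnegSpectrumClass ℝ A]

lemma self_mul_rpow (a : A) {r : ℝ} (hr : 0 ≤ r) (ha : 0 ≤ a := by cfc_tac) :
    a * a ^ r = a ^ (1 + r) := by
  simp only [rpow_def]
  nth_rewrite 1 [← cfc_id' ℝ≥0 a]
  rw [← cfc_mul _ _ a]
  refine cfc_congr fun x _ => ?_
  rw [NNReal.rpow_add' (by positivity), NNReal.rpow_one]

variable [IsSemitopologicalRing A] [T2Space A]

lemma mul_eq_rpow_of_rpow_eq_rpow {a b : A} {p q : ℝ} (hp : 0 < p) (hq : 0 < q)
    (hpq : 1 / p + 1 / q = 1) (hab : a ^ p = b ^ q) (ha : 0 ≤ a := by cfc_tac)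
    (hb : 0 ≤ b := by cfc_tac) : a * b = a ^ p :=
  calc a * b = a * (b ^ q) ^ (1 / q) := by
        rw [rpow_rpow_of_exponent_nonneg b q _ hq.le (by positivity), mul_one_div_cancel hq.ne',
          rpow_one b]
    _ = a * a ^ (p * (1 / q)) := by
        rw [← hab, rpow_rpow_of_exponent_nonneg a p _ hp.le (by positivity)]
    _ = a ^ (1 + p * (1 / q)) := self_mul_rpow a (by positivity)
    _ = a ^ p := by
        congr 1
        field_simp at hpq ⊢
        linarith

end CFC

lemma mfun_eq_cfc {m : Type*} [Fintype m] [DecidableEq m] (f : ℝ → ℝ) {A : Matrix m m ℂ}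
    (hA : A.IsHermitian) : mfun f A = cfc f A := by
  rw [mfun, dif_pos hA, hA.cfc_eq]
  rfl

lemma mpow_eq_rpow {m : Type*} [Fintype m] [DecidableEq m] {A : Matrix m m ℂ} (hA : 0 ≤ A)
    (p : ℝ) : mpow A p = A ^ p := by
  rw [mpow, mfun_eq_cfc _ hA.posSemidef.isHermitian, CFC.rpow_eq_cfc_real]

theorem young_trace_equality {n : ℕ} (X Y : Matrix (Fin n) (Fin n) ℂ)
    (hX : X.PosSemidef) (hY : Y.PosSemidef) (p q : ℝ) (hp : 1 < p) (hq : 1 < q)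
    (hpq : 1 / p + 1 / q = 1) (heq : mpow X p = mpow Y q) :
    (X * Y).trace = (1 / p : ℂ) * (mpow X p).trace + (1 / q : ℂ) * (mpow Y q).trace := by
  rw [mpow_eq_rpow hX.nonneg, mpow_eq_rpow hY.nonneg] at heq ⊢
  have hpq' : (1 / p : ℂ) + 1 / q = 1 := by exact_mod_cast hpq
  rw [CFC.mul_eq_rpow_of_rpow_eq_rpow (by linarith) (by linarith) hpq heq hX.nonneg hY.nonneg,
    ← heq, ← add_mul, hpq', one_mul]
end

section
/- Let ρ, σ be positive definite n×n matrices and α > 1, and set β = (α−1)/(2α). Then tr((σ^{−β} ρ σ^{−β})^α) equals the supremum over positive semidefinite matrices H of α·tr(Hρ) − (α−1)·tr((H^{1/2} σ^{2β} H^{1/2})^{α/(α−1)}). -/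
open Matrix ComplexOrder

/-!
Put `K = σ^β H σ^β` and `A = σ^{-β} ρ σ^{-β}`. Then `tr (H ρ) = tr (K A)`, and
`H^{1/2} σ^{2β} H^{1/2} = B* B` while `K = B B*` for `B = σ^β H^{1/2}`, so these two matrices
have the same spectrum and the objective equals `α tr (K A) - (α - 1) tr K^q` with
`q = α / (α - 1)`. Young's trace inequality `tr (K A) ≤ tr K^q / q + tr A^α / α` bounds it by
`tr A^α`, with equality at `K = A^{α-1}`, i.e. `H = σ^{-β} A^{α-1} σ^{-β}`.
-/

namespace CFC

variable {A : Type*} [PartialOrder A] [Ring A] [StarRing A] [TopologicalSpace A]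
  [StarOrderedRing A] [Algebra ℝ A] [ContinuousFunctionalCalculus ℝ A IsSelfAdjoint]
  [NonnegSpectrumClass ℝ A] [IsSemitopologicalRing A] [T2Space A]

lemma rpow_add_of_pos (a : A) {x y : ℝ} (hx : 0 < x) (hy : 0 < y) :
    a ^ (x + y) = a ^ x * a ^ y := by
  lift x to NNReal using hx.le
  lift y to NNReal using hy.le
  rw [← NNReal.coe_add, ← nnrpow_eq_rpow (add_pos hx hy), ← nnrpow_eq_rpow hx,
    ← nnrpow_eq_rpow hy, nnrpow_add hx hy]

end CFC

namespace Matrix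

variable {n 𝕜 : Type*} [Fintype n] [DecidableEq n] [RCLike 𝕜]

lemma IsHermitian.trace_cfc {A : Matrix n n 𝕜} (hA : A.IsHermitian) (f : ℝ → ℝ) :
    (cfc f A).trace = ∑ i, (f (hA.eigenvalues i) : 𝕜) := by
  rw [hA.cfc_eq, IsHermitian.cfc, Unitary.conjStarAlgAut_apply, trace_mul_cycle,
    Unitary.coe_star_mul_self, one_mul, trace_diagonal]
  rfl

lemma trace_cfc_conjTranspose_mul_self (B : Matrix n n 𝕜) (f : ℝ → ℝ) :
    (cfc f (Bᴴ * B)).trace = (cfc f (B * Bᴴ)).trace := by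
  have h₁ := isHermitian_conjTranspose_mul_self B
  have h₂ := isHermitian_mul_conjTranspose_self B
  rw [h₁.trace_cfc, h₂.trace_cfc,
    (h₁.eigenvalues_eq_eigenvalues_iff h₂).2 (charpoly_mul_comm _ _)]

lemma sum_norm_sq_apply_right {W : Matrix n n 𝕜} (hW : W ∈ unitary (Matrix n n 𝕜)) (i : n) :
    ∑ j, ‖W i j‖ ^ 2 = 1 := by
  have h : (W * star W) i i = (1 : Matrix n n 𝕜) i i := by rw [Unitary.mul_star_self_of_mem hW]
  simp only [mul_apply, star_apply, RCLike.star_def, RCLike.mul_conj, one_apply_eq] at h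
  exact_mod_cast h

lemma sum_norm_sq_apply_left {W : Matrix n n 𝕜} (hW : W ∈ unitary (Matrix n n 𝕜)) (j : n) :
    ∑ i, ‖W i j‖ ^ 2 = 1 := by
  have h : (star W * W) j j = (1 : Matrix n n 𝕜) j j := by rw [Unitary.star_mul_self_of_mem hW]
  simp only [mul_apply, star_apply, RCLike.star_def, RCLike.conj_mul, one_apply_eq] at h
  exact_mod_cast h

lemma IsHermitian.re_trace_mul_eq_sum {K A : Matrix n n 𝕜} (hK : K.IsHermitian)
    (hA : A.IsHermitian) :
    RCLike.re (K * A).trace = ∑ i, ∑ j, hK.eigenvalues i * hA.eigenvalues j *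
      ‖(star (hK.eigenvectorUnitary : Matrix n n 𝕜) * hA.eigenvectorUnitary) i j‖ ^ 2 := by
  set U : Matrix n n 𝕜 := (hK.eigenvectorUnitary : Matrix n n 𝕜)
  set V : Matrix n n 𝕜 := (hA.eigenvectorUnitary : Matrix n n 𝕜)
  have htrace : (K * A).trace = (diagonal (RCLike.ofReal ∘ hK.eigenvalues) * (star U * V) *
      (diagonal (RCLike.ofReal ∘ hA.eigenvalues) * star (star U * V))).trace := by
    conv_lhs => rw [hK.spectral_theorem, hA.spectral_theorem]
    simp only [Unitary.conjStarAlgAut_apply, star_mul, star_star]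
    rw [show ∀ D E : Matrix n n 𝕜, U * D * star U * (V * E * star V)
        = U * (D * star U * V * E * star V) by simp only [mul_assoc, implies_true],
      trace_mul_comm]
    simp only [mul_assoc]
  rw [htrace]
  generalize star U * V = W
  simp only [trace, diag_apply, map_sum, mul_assoc, diagonal_mul]
  simp only [mul_apply, diagonal_apply, ite_mul, zero_mul, Finset.sum_ite_eq, Finset.mem_univ,
    if_true, star_apply, RCLike.star_def, Function.comp_apply, Finset.mul_sum, map_sum]
  refine Finset.sum_congr rfl fun i _ => Finset.sum_congr rfl fun j _ => ?_
  rw [mul_left_comm (W i j), RCLike.mul_conj]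
  norm_cast

section MatrixOrder
open scoped MatrixOrder

lemma PosSemidef.trace_rpow {A : Matrix n n 𝕜} (hA : A.PosSemidef) (p : ℝ) :
    (A ^ p).trace = ∑ i, ((hA.1.eigenvalues i ^ p : ℝ) : 𝕜) := by
  rw [CFC.rpow_eq_cfc_real hA.nonneg, hA.1.trace_cfc]

lemma trace_rpow_conjTranspose_mul_self (B : Matrix n n 𝕜) (p : ℝ) :
    ((Bᴴ * B) ^ p).trace = ((B * Bᴴ) ^ p).trace := by
  rw [CFC.rpow_eq_cfc_real (posSemidef_conjTranspose_mul_self B).nonneg,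
    CFC.rpow_eq_cfc_real (posSemidef_self_mul_conjTranspose B).nonneg,
    trace_cfc_conjTranspose_mul_self]

/-- Young's inequality for the trace: in the eigenbases of `K` and `A`,
`re (K * A).trace = ∑ i j, λᵢ μⱼ ‖Wᵢⱼ‖²` with `W` unitary, so `(‖Wᵢⱼ‖²)` is doubly stochastic
and the scalar Young inequality `λμ ≤ λ^p/p + μ^q/q` can be averaged against it. -/
lemma PosSemidef.re_trace_mul_le {K A : Matrix n n 𝕜} (hK : K.PosSemidef) (hA : A.PosSemidef)
    {p q : ℝ} (hpq : p.HolderConjugate q) :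
    RCLike.re (K * A).trace ≤ RCLike.re (K ^ p).trace / p + RCLike.re (A ^ q).trace / q := by
  have hW : star (hK.1.eigenvectorUnitary : Matrix n n 𝕜) * hA.1.eigenvectorUnitary ∈
      unitary (Matrix n n 𝕜) :=
    (star hK.1.eigenvectorUnitary * hA.1.eigenvectorUnitary).2
  rw [hK.1.re_trace_mul_eq_sum hA.1, hK.trace_rpow, hA.trace_rpow]
  generalize star (hK.1.eigenvectorUnitary : Matrix n n 𝕜) * hA.1.eigenvectorUnitary = W at hW ⊢
  simp only [map_sum, RCLike.ofReal_re]
  calc ∑ i, ∑ j, hK.1.eigenvalues i * hA.1.eigenvalues j * ‖W i j‖ ^ 2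
      ≤ ∑ i, ∑ j, (hK.1.eigenvalues i ^ p / p + hA.1.eigenvalues j ^ q / q) * ‖W i j‖ ^ 2 := by
        gcongr with i _ j _
        exact Real.young_inequality_of_nonneg (hK.eigenvalues_nonneg i)
          (hA.eigenvalues_nonneg j) hpq
    _ = (∑ i, hK.1.eigenvalues i ^ p) / p + (∑ j, hA.1.eigenvalues j ^ q) / q := by
        simp only [add_mul, Finset.sum_add_distrib, ← Finset.mul_sum, Finset.sum_div]
        rw [Finset.sum_comm (f := fun i j => hA.1.eigenvalues j ^ q / q * ‖W i j‖ ^ 2)]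
        simp only [← Finset.mul_sum, sum_norm_sq_apply_right hW, sum_norm_sq_apply_left hW,
          mul_one]

variable {σ ρ H : Matrix n n 𝕜}

lemma trace_mul_eq_trace_conj_mul_conj (hσ : σ.PosDef) (β : ℝ) :
    (H * ρ).trace = ((σ ^ β * H * σ ^ β) * (σ ^ (-β) * ρ * σ ^ (-β))).trace := by
  have hσ' := isStrictlyPositive_iff_posDef.2 hσ
  have hcancel : σ ^ β * H * σ ^ β * (σ ^ (-β) * ρ * σ ^ (-β)) = σ ^ β * (H * ρ) * σ ^ (-β) := by
    simp only [← mul_assoc, mul_assoc _ (σ ^ β) (σ ^ (-β)), CFC.rpow_mul_rpow_neg β hσ', mul_one]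
  rw [hcancel, trace_mul_cycle, CFC.rpow_neg_mul_rpow β hσ', one_mul]

lemma trace_rpow_sqrt_conj_eq (hσ : σ.PosDef) (hH : H.PosSemidef) (β r : ℝ) :
    ((H ^ (1 / 2 : ℝ) * σ ^ (2 * β) * H ^ (1 / 2 : ℝ)) ^ r).trace
      = ((σ ^ β * H * σ ^ β) ^ r).trace := by
  have hstar : (σ ^ β * H ^ (1 / 2 : ℝ))ᴴ = H ^ (1 / 2 : ℝ) * σ ^ β := by
    rw [conjTranspose_mul, ← star_eq_conjTranspose, ← star_eq_conjTranspose,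
      CFC.rpow_nonneg.isSelfAdjoint.star_eq, CFC.rpow_nonneg.isSelfAdjoint.star_eq]
  have hsqrt : H ^ (1 / 2 : ℝ) * H ^ (1 / 2 : ℝ) = H := by
    rw [← CFC.sqrt_eq_rpow, CFC.sqrt_mul_sqrt_self H hH.nonneg]
  have h₁ : (σ ^ β * H ^ (1 / 2 : ℝ))ᴴ * (σ ^ β * H ^ (1 / 2 : ℝ))
      = H ^ (1 / 2 : ℝ) * σ ^ (2 * β) * H ^ (1 / 2 : ℝ) := by
    rw [hstar, two_mul, CFC.rpow_add hσ.isUnit]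
    simp only [mul_assoc]
  have h₂ : (σ ^ β * H ^ (1 / 2 : ℝ)) * (σ ^ β * H ^ (1 / 2 : ℝ))ᴴ = σ ^ β * H * σ ^ β := by
    rw [hstar, mul_assoc, ← mul_assoc (H ^ _), hsqrt, mul_assoc]
  rw [← h₁, ← h₂, trace_rpow_conjTranspose_mul_self]

noncomputable def variationalObjective (ρ σ : Matrix n n 𝕜) (α β : ℝ) (H : Matrix n n 𝕜) : ℝ :=
  α * RCLike.re (H * ρ).trace -
    (α - 1) * RCLike.re ((H ^ (1 / 2 : ℝ) * σ ^ (2 * β) * H ^ (1 / 2 : ℝ)) ^ (α / (α - 1))).trace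

lemma variationalObjective_le (hσ : σ.PosDef) (hρ : ρ.PosSemidef) (hH : H.PosSemidef) {α : ℝ}
    (hα : 1 < α) (β : ℝ) :
    variationalObjective ρ σ α β H ≤ RCLike.re ((σ ^ (-β) * ρ * σ ^ (-β)) ^ α).trace := by
  have hK : (σ ^ β * H * σ ^ β).PosSemidef :=
    nonneg_iff_posSemidef.1 (conjugate_nonneg_of_nonneg hH.nonneg CFC.rpow_nonneg)
  have hA : (σ ^ (-β) * ρ * σ ^ (-β)).PosSemidef :=
    nonneg_iff_posSemidef.1 (conjugate_nonneg_of_nonneg hρ.nonneg CFC.rpow_nonneg)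
  have hyoung := hK.re_trace_mul_le hA (Real.HolderConjugate.conjExponent hα).symm
  rw [variationalObjective, trace_rpow_sqrt_conj_eq hσ hH, trace_mul_eq_trace_conj_mul_conj hσ β]
  have hα₁ : 0 < α - 1 := sub_pos.2 hα
  calc _ ≤ α * (RCLike.re ((σ ^ β * H * σ ^ β) ^ (α / (α - 1))).trace / (α / (α - 1)) +
          RCLike.re ((σ ^ (-β) * ρ * σ ^ (-β)) ^ α).trace / α) -
        (α - 1) * RCLike.re ((σ ^ β * H * σ ^ β) ^ (α / (α - 1))).trace := by
        gcongr
        exact hyoung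
    _ = _ := by field_simp; ring

lemma exists_variationalObjective_eq (hσ : σ.PosDef) (hρ : ρ.PosSemidef) {α : ℝ} (hα : 1 < α)
    (β : ℝ) : ∃ H : Matrix n n 𝕜, H.PosSemidef ∧
      variationalObjective ρ σ α β H = RCLike.re ((σ ^ (-β) * ρ * σ ^ (-β)) ^ α).trace := by
  set A := σ ^ (-β) * ρ * σ ^ (-β)
  have hA : 0 ≤ A := conjugate_nonneg_of_nonneg hρ.nonneg CFC.rpow_nonneg
  have hH : (σ ^ (-β) * A ^ (α - 1) * σ ^ (-β)).PosSemidef :=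
    nonneg_iff_posSemidef.1 (conjugate_nonneg_of_nonneg CFC.rpow_nonneg CFC.rpow_nonneg)
  refine ⟨_, hH, ?_⟩
  have hσ' := isStrictlyPositive_iff_posDef.2 hσ
  have hα₁ : 0 < α - 1 := sub_pos.2 hα
  have hK : σ ^ β * (σ ^ (-β) * A ^ (α - 1) * σ ^ (-β)) * σ ^ β = A ^ (α - 1) := by
    simp only [← mul_assoc, CFC.rpow_mul_rpow_neg β hσ', one_mul]
    rw [mul_assoc, CFC.rpow_neg_mul_rpow β hσ', mul_one]
  have hmul : A ^ (α - 1) * A = A ^ α := by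
    simpa only [sub_add_cancel, CFC.rpow_one A hA, eq_comm] using CFC.rpow_add_of_pos A hα₁ one_pos
  have hpow : (A ^ (α - 1)) ^ (α / (α - 1)) = A ^ α := by
    rw [CFC.rpow_rpow_of_exponent_nonneg A _ _ hα₁.le (by positivity) hA,
      mul_div_cancel₀ _ hα₁.ne']
  rw [variationalObjective, trace_rpow_sqrt_conj_eq hσ hH, trace_mul_eq_trace_conj_mul_conj hσ β,
    hK, hmul, hpow]
  ring

lemma isGreatest_variationalObjective (hσ : σ.PosDef) (hρ : ρ.PosSemidef) {α : ℝ} (hα : 1 < α)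
    (β : ℝ) :
    IsGreatest {x | ∃ H : Matrix n n 𝕜, H.PosSemidef ∧ x = variationalObjective ρ σ α β H}
      (RCLike.re ((σ ^ (-β) * ρ * σ ^ (-β)) ^ α).trace) := by
  obtain ⟨H₀, hH₀, hval⟩ := exists_variationalObjective_eq hσ hρ hα β
  refine ⟨⟨H₀, hH₀, hval.symm⟩, ?_⟩
  rintro x ⟨H, hH, rfl⟩
  exact variationalObjective_le hσ hρ hH hα β

lemma mfun_eq_cfc {A : Matrix n n ℂ} (hA : A.IsHermitian) (f : ℝ → ℝ) : mfun f A = cfc f A := by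
  rw [hA.cfc_eq, IsHermitian.cfc, Unitary.conjStarAlgAut_apply, mfun, dif_pos hA]
  rfl

lemma mpow_eq_rpow {A : Matrix n n ℂ} (hA : A.PosSemidef) (p : ℝ) : mpow A p = A ^ p := by
  rw [CFC.rpow_eq_cfc_real hA.nonneg]
  exact mfun_eq_cfc hA.1 _

lemma mpow_mul_mul_mpow_eq_rpow {A B : Matrix n n ℂ} (hA : A.PosSemidef) (hB : B.PosSemidef)
    (p r : ℝ) : mpow (mpow A p * B * mpow A p) r = (A ^ p * B * A ^ p) ^ r := by
  rw [mpow_eq_rpow hA, mpow_eq_rpow (nonneg_iff_posSemidef.1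
    (conjugate_nonneg_of_nonneg hB.nonneg CFC.rpow_nonneg))]

end MatrixOrder

end Matrix

theorem variational_formula_sup_general {n : ℕ} (ρ σ : Matrix (Fin n) (Fin n) ℂ)
    (hρ : ρ.PosDef) (hσ : σ.PosDef) (α : ℝ) (hα : 1 < α) (β : ℝ) :
    IsLUB {x : ℝ | ∃ H : Matrix (Fin n) (Fin n) ℂ, H.PosSemidef ∧
        x = α * (H * ρ).trace.re -
          (α - 1) * (mpow (mpow H (1/2) * mpow σ (2 * β) * mpow H (1/2)) (α / (α - 1))).trace.re}
      ((mpow (mpow σ (-β) * ρ * mpow σ (-β)) α).trace.re) := by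
  open scoped MatrixOrder in
  have hmax : IsLUB {x | ∃ H : Matrix (Fin n) (Fin n) ℂ, H.PosSemidef ∧
      x = variationalObjective ρ σ α β H} (RCLike.re ((σ ^ (-β) * ρ * σ ^ (-β)) ^ α).trace) :=
    (isGreatest_variationalObjective hσ hρ.posSemidef hα β).isLUB
  convert hmax using 3 with x
  · refine exists_congr fun H => and_congr_right fun hH => ?_
    rw [mpow_eq_rpow hσ.posSemidef,
      mpow_mul_mul_mpow_eq_rpow hH (nonneg_iff_posSemidef.1 CFC.rpow_nonneg)]
    rfl
  · rw [mpow_mul_mul_mpow_eq_rpow hσ.posSemidef hρ.posSemidef]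
    rfl

theorem variational_formula_sup {n : ℕ} (ρ σ : Matrix (Fin n) (Fin n) ℂ)
    (hρ : ρ.PosDef) (hσ : σ.PosDef) (α : ℝ) (hα : 1 < α) (β : ℝ) (hβ : β = (α - 1) / (2 * α)) :
    IsLUB {x : ℝ | ∃ H : Matrix (Fin n) (Fin n) ℂ, H.PosSemidef ∧
        x = α * (H * ρ).trace.re -
          (α - 1) * (mpow (mpow H (1/2) * mpow σ (2 * β) * mpow H (1/2)) (α / (α - 1))).trace.re}
      ((mpow (mpow σ (-β) * ρ * mpow σ (-β)) α).trace.re) :=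
  variational_formula_sup_general ρ σ hρ hσ α hα β
end

section
/- (Tensor property) For positive definite matrices ρ, σ on ℂ^n, a positive definite matrix τ on ℂ^m, and α ∈ (0,1) ∪ (1,∞), one has tr(((σ⊗τ)^{(1−α)/(2α)} (ρ⊗τ) (σ⊗τ)^{(1−α)/(2α)})^α) = tr((σ^{(1−α)/(2α)} ρ σ^{(1−α)/(2α)})^α) · tr(τ). -/
open Matrix ComplexOrder

/-!
`mfun` is the continuous functional calculus of Hermitian matrices, and for every unitary
diagonalisation `A = U * diagonal d * star U` (not only the eigenvector basis Mathlib picks) one has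
`cfc f A = U * diagonal (f ∘ d) * star U`, since on the finitely many relevant reals `f` agrees with
an interpolating polynomial. Diagonalising `σ` and `τ` by `U` and `V`, the matrix `σ ⊗ₖ τ` is
diagonalised by `U ⊗ₖ V` with the products of eigenvalues, and `t ↦ t ^ p` is multiplicative on
`[0, ∞)`, so `(σ ⊗ₖ τ) ^ p = σ ^ p ⊗ₖ τ ^ p`. With `s = (1 - α) / (2α)` the sandwiched matrix is
therefore `(σ ^ s * ρ * σ ^ s) ⊗ₖ τ ^ (2s + 1)`, where `2s + 1 = 1 / α`; its `α`-th power is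
`(σ ^ s * ρ * σ ^ s) ^ α ⊗ₖ τ`, and the trace of a Kronecker product is the product of the traces.
-/

open Kronecker Unitary Polynomial

lemma Lagrange.exists_eval_eq {F : Type*} [Field F] (s : Finset F) (f : F → F) :
    ∃ P : F[X], ∀ x ∈ s, P.eval x = f x := by
  classical
  exact ⟨interpolate s id f, fun _ hx => by
    simpa using eval_interpolate_at_node f Function.injective_id.injOn hx⟩

section

variable {k l : Type*} [Fintype k] [DecidableEq k] [Fintype l] [DecidableEq l]

lemma Matrix.aeval_diagonal {R α : Type*} [CommSemiring R] [CommSemiring α] [Algebra R α]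
    (P : R[X]) (v : k → α) : aeval (diagonal v) P = diagonal fun i => aeval (v i) P := by
  change aeval (diagonalAlgHom R v) P = _
  rw [aeval_algHom_apply, aeval_pi_apply]
  rfl

lemma Matrix.kronecker_conj_diagonal {R : Type*} [CommSemiring R] [StarRing R] (U : Matrix k k R)
    (V : Matrix l l R) (a : k → R) (b : l → R) :
    (U * diagonal a * star U) ⊗ₖ (V * diagonal b * star V) =
      (U ⊗ₖ V) * diagonal (fun p => a p.1 * b p.2) * star (U ⊗ₖ V) := by
  rw [star_eq_conjTranspose, star_eq_conjTranspose, star_eq_conjTranspose, conjTranspose_kronecker,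
    mul_kronecker_mul, mul_kronecker_mul, diagonal_kronecker_diagonal]

lemma Matrix.continuousOn_spectrum (f : ℝ → ℝ) (A : Matrix k k ℂ) :
    ContinuousOn f (spectrum ℝ A) :=
  A.finite_real_spectrum.continuousOn f

lemma Matrix.IsHermitian.cfc_eq_conj_diagonal {A : Matrix k k ℂ} (hA : A.IsHermitian)
    (f : ℝ → ℝ) :
    cfc f A = (hA.eigenvectorUnitary : Matrix k k ℂ) *
      diagonal (fun i => (f (hA.eigenvalues i) : ℂ)) *
      star (hA.eigenvectorUnitary : Matrix k k ℂ) := by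
  rw [hA.cfc_eq, IsHermitian.cfc, conjStarAlgAut_apply]
  rfl

lemma Matrix.IsHermitian.eq_conj_diagonal {A : Matrix k k ℂ} (hA : A.IsHermitian) :
    A = (hA.eigenvectorUnitary : Matrix k k ℂ) *
      diagonal (fun i => (hA.eigenvalues i : ℂ)) * star (hA.eigenvectorUnitary : Matrix k k ℂ) :=
  (cfc_id' ℝ A hA).symm.trans (hA.cfc_eq_conj_diagonal id)

lemma mfun_eq_cfc_s15 (f : ℝ → ℝ) (A : Matrix k k ℂ) : mfun f A = cfc f A := by
  by_cases hA : A.IsHermitian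
  · rw [hA.cfc_eq_conj_diagonal, mfun, dif_pos hA]
  · rw [mfun, dif_neg hA, cfc_apply_of_not_predicate A (show ¬IsSelfAdjoint A from hA)]

lemma Matrix.cfc_unitary_conj_diagonal (f : ℝ → ℝ) (U : unitary (Matrix k k ℂ)) (d : k → ℝ) :
    cfc f ((U : Matrix k k ℂ) * diagonal (fun i => (d i : ℂ)) * star (U : Matrix k k ℂ)) =
      U * diagonal (fun i => (f (d i) : ℂ)) * star (U : Matrix k k ℂ) := by
  generalize hAU : (U : Matrix k k ℂ) * diagonal (fun i => (d i : ℂ)) * star (U : Matrix k k ℂ) = A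
  have hA : A.IsHermitian := hAU ▸ isHermitian_mul_mul_conjTranspose _
    (isHermitian_diagonal_iff.mpr fun i => Complex.conj_ofReal (d i))
  obtain ⟨P, hP⟩ := Lagrange.exists_eval_eq
    (Finset.univ.image d ∪ Finset.univ.image hA.eigenvalues) f
  have hfP : (spectrum ℝ A).EqOn f (fun x => P.eval x) := by
    rw [hA.spectrum_real_eq_range_eigenvalues]
    rintro _ ⟨i, rfl⟩
    exact (hP _ (by simp)).symm
  have hPd : (fun i => aeval (d i : ℂ) P) = fun i => (f (d i) : ℂ) := funext fun i => by
    rw [← hP _ (by simp)]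
    exact aeval_algebraMap_apply_eq_algebraMap_eval (d i) P
  rw [cfc_congr hfP, cfc_polynomial P A, ← hAU, ← conjStarAlgAut_apply (S := ℝ), aeval_algHom_apply,
    aeval_diagonal, hPd, conjStarAlgAut_apply]

lemma Matrix.cfc_kronecker (f : ℝ → ℝ) {A : Matrix k k ℂ} {B : Matrix l l ℂ}
    (hA : A.IsHermitian) (hB : B.IsHermitian)
    (hf : ∀ x ∈ spectrum ℝ A, ∀ y ∈ spectrum ℝ B, f (x * y) = f x * f y) :
    cfc f (A ⊗ₖ B) = cfc f A ⊗ₖ cfc f B := by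
  let W : unitary (Matrix (k × l) (k × l) ℂ) :=
    ⟨_, kronecker_mem_unitary hA.eigenvectorUnitary.2 hB.eigenvectorUnitary.2⟩
  have hf_eigenvalues : (fun p : k × l => (f (hA.eigenvalues p.1 * hB.eigenvalues p.2) : ℂ)) =
      fun p => (f (hA.eigenvalues p.1) : ℂ) * (f (hB.eigenvalues p.2) : ℂ) := by
    ext p
    rw [hf _ (hA.eigenvalues_mem_spectrum_real _) _ (hB.eigenvalues_mem_spectrum_real _),
      Complex.ofReal_mul]
  calc cfc f (A ⊗ₖ B)
      = cfc f ((W : Matrix (k × l) (k × l) ℂ) *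
          diagonal (fun p => ((hA.eigenvalues p.1 * hB.eigenvalues p.2 : ℝ) : ℂ)) *
          star (W : Matrix (k × l) (k × l) ℂ)) := by
        conv_lhs => rw [hA.eq_conj_diagonal, hB.eq_conj_diagonal, kronecker_conj_diagonal]
        push_cast
        rfl
    _ = cfc f A ⊗ₖ cfc f B := by
        rw [cfc_unitary_conj_diagonal, hf_eigenvalues, hA.cfc_eq_conj_diagonal,
          hB.cfc_eq_conj_diagonal, kronecker_conj_diagonal]

section MatrixPower

open scoped MatrixOrder

variable {A : Matrix k k ℂ}

lemma mpow_eq_cfc (A : Matrix k k ℂ) (p : ℝ) : mpow A p = cfc (fun x : ℝ => x ^ p) A :=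
  mfun_eq_cfc_s15 _ A

lemma isHermitian_mpow (A : Matrix k k ℂ) (p : ℝ) : (mpow A p).IsHermitian := by
  rw [mpow_eq_cfc]
  exact cfc_predicate _ _

lemma posSemidef_mpow (hA : A.PosSemidef) (p : ℝ) : (mpow A p).PosSemidef := by
  rw [mpow_eq_cfc]
  exact (cfc_nonneg fun x hx =>
    Real.rpow_nonneg (spectrum_nonneg_of_nonneg hA.nonneg hx) p).posSemidef

lemma mpow_one (hA : A.IsHermitian) : mpow A 1 = A := by
  simp only [mpow_eq_cfc, Real.rpow_one]
  exact cfc_id' ℝ A hA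

lemma mpow_mpow (hA : A.PosSemidef) (p q : ℝ) : mpow (mpow A p) q = mpow A (p * q) := by
  rw [mpow_eq_cfc, mpow_eq_cfc, mpow_eq_cfc, ← cfc_comp' (· ^ q) (· ^ p) A
    ((A.finite_real_spectrum.image _).continuousOn _) (A.continuousOn_spectrum _)]
  exact cfc_congr fun x hx => (Real.rpow_mul (spectrum_nonneg_of_nonneg hA.nonneg hx) p q).symm

lemma mpow_add (hA : A.PosDef) (p q : ℝ) : mpow A (p + q) = mpow A p * mpow A q := by
  rw [mpow_eq_cfc, mpow_eq_cfc, mpow_eq_cfc,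
    ← cfc_mul _ _ A (A.continuousOn_spectrum _) (A.continuousOn_spectrum _)]
  exact cfc_congr fun x hx => Real.rpow_add (hA.isStrictlyPositive.spectrum_pos hx) p q

lemma mpow_kronecker {B : Matrix l l ℂ} (hA : A.PosSemidef) (hB : B.PosSemidef) (p : ℝ) :
    mpow (A ⊗ₖ B) p = mpow A p ⊗ₖ mpow B p := by
  simp only [mpow_eq_cfc]
  exact cfc_kronecker _ hA.1 hB.1 fun x hx y hy =>
    Real.mul_rpow (spectrum_nonneg_of_nonneg hA.nonneg hx) (spectrum_nonneg_of_nonneg hB.nonneg hy)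

end MatrixPower

end

open Kronecker in
theorem tensor_property_general {n m : ℕ} (ρ σ : Matrix (Fin n) (Fin n) ℂ)
    (hρ : ρ.PosDef) (hσ : σ.PosDef) (τ : Matrix (Fin m) (Fin m) ℂ) (hτ : τ.PosDef)
    (α : ℝ) (hα0 : 0 < α) :
    (mpow (mpow (σ ⊗ₖ τ) ((1 - α) / (2 * α)) * (ρ ⊗ₖ τ) *
        mpow (σ ⊗ₖ τ) ((1 - α) / (2 * α))) α).trace =
      (mpow (mpow σ ((1 - α) / (2 * α)) * ρ * mpow σ ((1 - α) / (2 * α))) α).trace * τ.trace := by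
  set s := (1 - α) / (2 * α)
  have hτ_sandwich : mpow τ s * τ * mpow τ s = mpow τ α⁻¹ :=
    calc mpow τ s * τ * mpow τ s = mpow τ s * mpow τ 1 * mpow τ s := by rw [mpow_one hτ.1]
      _ = mpow τ (s + 1 + s) := by rw [mpow_add hτ, mpow_add hτ]
      _ = mpow τ α⁻¹ := by congr 1; simp only [s]; field_simp; ring
  have hσρσ : (mpow σ s * ρ * mpow σ s).PosSemidef := by
    simpa only [(isHermitian_mpow σ s).eq] using
      hρ.posSemidef.conjTranspose_mul_mul_same (mpow σ s)
  rw [mpow_kronecker hσ.posSemidef hτ.posSemidef, ← mul_kronecker_mul, ← mul_kronecker_mul,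
    hτ_sandwich, mpow_kronecker hσρσ (posSemidef_mpow hτ.posSemidef _), mpow_mpow hτ.posSemidef,
    inv_mul_cancel₀ hα0.ne', mpow_one hτ.1, trace_kronecker]

open Kronecker in
theorem tensor_property {n m : ℕ} (ρ σ : Matrix (Fin n) (Fin n) ℂ)
    (hρ : ρ.PosDef) (hσ : σ.PosDef) (τ : Matrix (Fin m) (Fin m) ℂ) (hτ : τ.PosDef)
    (α : ℝ) (hα0 : 0 < α) (hα1 : α ≠ 1) :
    (mpow (mpow (σ ⊗ₖ τ) ((1 - α) / (2 * α)) * (ρ ⊗ₖ τ) *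
        mpow (σ ⊗ₖ τ) ((1 - α) / (2 * α))) α).trace =
      (mpow (mpow σ ((1 - α) / (2 * α)) * ρ * mpow σ ((1 - α) / (2 * α))) α).trace * τ.trace :=
  tensor_property_general ρ σ hρ hσ τ hτ α hα0
end
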